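/- arXiv:2202.06370 — 2 statements merged into one kernel-verified Lean document; each statement's English description precedes it below -/
import Mathlib

section
/- Let Γ₁ ⊆ ℝⁿ and Γ₂ ⊆ ℝᵐ be compact sets equipped with the restriction of Lebesgue measure, let Γ = Γ₁ × Γ₂, and let H = L²(Γ₁) × L²(Γ). Define J: H → H by J(e₁, e₂) = (−A e₂, B e₁), where A is the partial-integration operator and B the extension operator, and let D = {(e, J e) : e ∈ H} ⊆ H × H. Then D is isotropic for the pairing ⟪(e, f), (e', f')⟫ = ⟨e, f'⟩_H + ⟨e', f⟩_H, i.e. ⟪a, b⟫ = 0 for all a, b ∈ D. In particular, every element (e, f) ∈ D satisfies the power balance ⟨e₁, f₁⟩_{L²(Γ₁)} + ⟨e₂, f₂⟩_{L²(Γ)} = 0, so the interconnection is energy preserving. -/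
open MeasureTheory RealInnerProductSpace

/-- The symmetric pairing `⟪(e, f), (e', f')⟫ = ⟨e, f'⟩_H + ⟨e', f⟩_H` on `H × H`, where
`H = H₁ × H₂` carries the product inner product
`⟨(a₁,a₂),(b₁,b₂)⟩_H = ⟨a₁,b₁⟩ + ⟨a₂,b₂⟩`. -/
noncomputable def bondPairing {H₁ H₂ : Type*}
    [NormedAddCommGroup H₁] [InnerProductSpace ℝ H₁]
    [NormedAddCommGroup H₂] [InnerProductSpace ℝ H₂]
    (a b : (H₁ × H₂) × (H₁ × H₂)) : ℝ :=
  (⟪a.1.1, b.2.1⟫ + ⟪a.1.2, b.2.2⟫) + (⟪b.1.1, a.2.1⟫ + ⟪b.1.2, a.2.2⟫)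

/- The power balance is the diagonal case of isotropy, and isotropy of the graph of
`J(e₁, e₂) = (-A e₂, B e₁)` only needs `B` to be the adjoint of `A`. For the partial-integration
and extension operators this adjointness is Fubini: both sides of `⟨A u, v⟩ = ⟨u, B v⟩` equal
`∫∫ u(x₁, x₂) v(x₁) dx₂ dx₁`. -/

theorem L2.inner_partialIntegral_eq_inner_extension {α β : Type*}
    [MeasurableSpace α] [MeasurableSpace β] {μ : Measure α} {ν : Measure β}
    [SFinite μ] [SFinite ν]
    {u : Lp ℝ 2 (μ.prod ν)} {v w : Lp ℝ 2 μ} {v' : Lp ℝ 2 (μ.prod ν)}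
    (hw : w =ᵐ[μ] fun x => ∫ y, u (x, y) ∂ν) (hv' : v' =ᵐ[μ.prod ν] fun p => v p.1) :
    ⟪w, v⟫ = ⟪u, v'⟫ := by
  have hint : Integrable (fun p : α × β => u p * v p.1) (μ.prod ν) := by
    refine (L2.integrable_inner (𝕜 := ℝ) u v').congr ?_
    filter_upwards [hv'] with p hp
    simp [hp, mul_comm]
  calc ⟪w, v⟫ = ∫ x, (∫ y, u (x, y) ∂ν) * v x ∂μ := by
        refine integral_congr_ae ?_
        filter_upwards [hw] with x hx
        simp [hx, mul_comm]
    _ = ∫ x, ∫ y, u (x, y) * v x ∂ν ∂μ := by simp only [integral_mul_const]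
    _ = ∫ p, u p * v p.1 ∂μ.prod ν := (integral_prod _ hint).symm
    _ = ⟪u, v'⟫ := by
        refine integral_congr_ae ?_
        filter_upwards [hv'] with p hp
        simp [hp, mul_comm]

section bondPairing

variable {H₁ H₂ : Type*} [NormedAddCommGroup H₁] [InnerProductSpace ℝ H₁]
  [NormedAddCommGroup H₂] [InnerProductSpace ℝ H₂]

theorem bondPairing_self (a : (H₁ × H₂) × (H₁ × H₂)) :
    bondPairing a a = 2 * (⟪a.1.1, a.2.1⟫ + ⟪a.1.2, a.2.2⟫) := by
  simp only [bondPairing]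
  ring

theorem bondPairing_eq_zero_of_isAdjoint {A : H₂ → H₁} {B : H₁ → H₂}
    (hAB : ∀ u v, ⟪A u, v⟫ = ⟪u, B v⟫) {a b : (H₁ × H₂) × (H₁ × H₂)}
    (ha : a.2 = (-A a.1.2, B a.1.1)) (hb : b.2 = (-A b.1.2, B b.1.1)) :
    bondPairing a b = 0 := by
  simp only [bondPairing, ha, hb, inner_neg_right, ← hAB, real_inner_comm (A _)]
  ring

end bondPairing

theorem coupling_graph_isotropic_and_energy_preserving_general
    (n m : ℕ) (Γ₁ : Set (EuclideanSpace ℝ (Fin n))) (Γ₂ : Set (EuclideanSpace ℝ (Fin m)))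
    (A : Lp ℝ 2 ((volume.restrict Γ₁).prod (volume.restrict Γ₂)) →L[ℝ]
        Lp ℝ 2 (volume.restrict Γ₁))
    (B : Lp ℝ 2 (volume.restrict Γ₁) →L[ℝ]
        Lp ℝ 2 ((volume.restrict Γ₁).prod (volume.restrict Γ₂)))
    (hA : ∀ u, (A u : _ → ℝ) =ᵐ[volume.restrict Γ₁]
        fun x₁ => ∫ x₂, u (x₁, x₂) ∂(volume.restrict Γ₂))
    (hB : ∀ v, (B v : _ → ℝ) =ᵐ[(volume.restrict Γ₁).prod (volume.restrict Γ₂)]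
        fun p : EuclideanSpace ℝ (Fin n) × EuclideanSpace ℝ (Fin m) => v p.1)
    (D : Set ((Lp ℝ 2 (volume.restrict Γ₁) ×
          Lp ℝ 2 ((volume.restrict Γ₁).prod (volume.restrict Γ₂))) ×
        (Lp ℝ 2 (volume.restrict Γ₁) ×
          Lp ℝ 2 ((volume.restrict Γ₁).prod (volume.restrict Γ₂)))))
    (hD : D = {p | p.2 = (-(A p.1.2), B p.1.1)}) :
    (∀ a ∈ D, ∀ b ∈ D, bondPairing a b = 0) ∧
      ∀ a ∈ D, ⟪a.1.1, a.2.1⟫ + ⟪a.1.2, a.2.2⟫ = 0 := by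
  have hAB : ∀ u v, ⟪A u, v⟫ = ⟪u, B v⟫ := fun u v =>
    L2.inner_partialIntegral_eq_inner_extension (hA u) (hB v)
  have isotropic : ∀ a ∈ D, ∀ b ∈ D, bondPairing a b = 0 := by
    subst hD
    exact fun a ha b hb => bondPairing_eq_zero_of_isAdjoint hAB ha hb
  refine ⟨isotropic, fun a ha => ?_⟩
  have := isotropic a ha a ha
  rw [bondPairing_self] at this
  linarith

/-- The graph `D = {(e, Je) : e ∈ H}` of `J(e₁,e₂) = (−Ae₂, Be₁)` on
`H = L²(Γ₁) × L²(Γ)` is isotropic for the pairing `⟪(e,f),(e',f')⟫ = ⟨e,f'⟩_H + ⟨e',f⟩_H`;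
in particular every `(e, f) ∈ D` satisfies the power balance
`⟨e₁, f₁⟩_{L²(Γ₁)} + ⟨e₂, f₂⟩_{L²(Γ)} = 0`, so the interconnection is energy preserving. -/
theorem coupling_graph_isotropic_and_energy_preserving
    (n m : ℕ) (Γ₁ : Set (EuclideanSpace ℝ (Fin n))) (Γ₂ : Set (EuclideanSpace ℝ (Fin m)))
    (hΓ₁ : IsCompact Γ₁) (hΓ₂ : IsCompact Γ₂)
    (A : Lp ℝ 2 ((volume.restrict Γ₁).prod (volume.restrict Γ₂)) →L[ℝ]
        Lp ℝ 2 (volume.restrict Γ₁))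
    (B : Lp ℝ 2 (volume.restrict Γ₁) →L[ℝ]
        Lp ℝ 2 ((volume.restrict Γ₁).prod (volume.restrict Γ₂)))
    (hA : ∀ u, (A u : _ → ℝ) =ᵐ[volume.restrict Γ₁]
        fun x₁ => ∫ x₂, u (x₁, x₂) ∂(volume.restrict Γ₂))
    (hB : ∀ v, (B v : _ → ℝ) =ᵐ[(volume.restrict Γ₁).prod (volume.restrict Γ₂)]
        fun p : EuclideanSpace ℝ (Fin n) × EuclideanSpace ℝ (Fin m) => v p.1)
    (D : Set ((Lp ℝ 2 (volume.restrict Γ₁) ×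
          Lp ℝ 2 ((volume.restrict Γ₁).prod (volume.restrict Γ₂))) ×
        (Lp ℝ 2 (volume.restrict Γ₁) ×
          Lp ℝ 2 ((volume.restrict Γ₁).prod (volume.restrict Γ₂)))))
    (hD : D = {p | p.2 = (-(A p.1.2), B p.1.1)}) :
    (∀ a ∈ D, ∀ b ∈ D, bondPairing a b = 0) ∧
      ∀ a ∈ D, ⟪a.1.1, a.2.1⟫ + ⟪a.1.2, a.2.2⟫ = 0 :=
  coupling_graph_isotropic_and_energy_preserving_general n m Γ₁ Γ₂ A B hA hB D hD
end

section
/- Let k, l ∈ ℕ, let M₁ ∈ ℝ^{k×k} and M₂ ∈ ℝ^{l×l} be symmetric positive definite matrices, and let D ∈ ℝ^{k×l}. Set M = diag(M₁, M₂) ∈ ℝ^{(k+l)×(k+l)} and J = [[0, −D],[Dᵀ, 0]] ∈ ℝ^{(k+l)×(k+l)}. Then the subspace 𝒟 = {(e, f) ∈ ℝ^{k+l} × ℝ^{k+l} : M f = J e} satisfies 𝒟 = 𝒟^⊥ with respect to the pairing ⟪(e, f), (e', f')⟫ = eᵀ M f' + e'ᵀ M f; that is, the finite-element-discretized interconnection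 relation M₁ u = D y, M₂ w = −Dᵀ v defines a finite-dimensional Dirac structure. -/
/-!
Write `𝒟 = {(e, f) : M f = J e}`. Since `J` is skew-symmetric, `eᵀ J e' = -e'ᵀ J e`, so for
`b = (e', f') ∈ 𝒟` the pairing with any `a = (e, f)` collapses to `e'ᵀ (M f - J e)`. This
vanishes when `a ∈ 𝒟`, giving `𝒟 ⊆ 𝒟^⊥`. Conversely, `M` is invertible, so every `e'`
is the first component of some `b ∈ 𝒟`; then `a ∈ 𝒟^⊥` forces `M f - J e = 0`.
-/

open Matrix

namespace Matrix

theorem transpose_fromBlocks_zero_neg_transpose_zero {n m R : Type*} [AddGroup R]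
    (D : Matrix n m R) :
    (fromBlocks 0 (-D) Dᵀ 0)ᵀ = -fromBlocks 0 (-D) Dᵀ 0 := by
  rw [fromBlocks_transpose, fromBlocks_neg]
  simp

variable {n R : Type*} [Fintype n] [CommRing R]

def pairingOrthogonal (M : Matrix n n R) (S : Set ((n → R) × (n → R))) :
    Set ((n → R) × (n → R)) :=
  {a | ∀ b ∈ S, a.1 ⬝ᵥ M *ᵥ b.2 + b.1 ⬝ᵥ M *ᵥ a.2 = 0}

theorem dotProduct_mulVec_of_transpose_eq_neg {J : Matrix n n R} (hJ : Jᵀ = -J) (x y : n → R) :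
    x ⬝ᵥ J *ᵥ y = -(y ⬝ᵥ J *ᵥ x) := by
  rw [dotProduct_mulVec, ← mulVec_transpose, hJ, neg_mulVec, neg_dotProduct, dotProduct_comm]

theorem pairing_eq_dotProduct_sub {M J : Matrix n n R} (hJ : Jᵀ = -J) {a b : (n → R) × (n → R)}
    (hb : M *ᵥ b.2 = J *ᵥ b.1) :
    a.1 ⬝ᵥ M *ᵥ b.2 + b.1 ⬝ᵥ M *ᵥ a.2 = b.1 ⬝ᵥ (M *ᵥ a.2 - J *ᵥ a.1) := by
  rw [hb, dotProduct_mulVec_of_transpose_eq_neg hJ, dotProduct_sub]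
  ring

theorem subset_pairingOrthogonal {M J : Matrix n n R} (hJ : Jᵀ = -J) :
    {p | M *ᵥ p.2 = J *ᵥ p.1} ⊆ pairingOrthogonal M {p | M *ᵥ p.2 = J *ᵥ p.1} := by
  intro a (ha : M *ᵥ a.2 = J *ᵥ a.1) b hb
  rw [pairing_eq_dotProduct_sub hJ hb, ha, sub_self, dotProduct_zero]

theorem pairingOrthogonal_subset [DecidableEq n] {M J : Matrix n n R} (hJ : Jᵀ = -J)
    (hM : IsUnit M) :
    pairingOrthogonal M {p | M *ᵥ p.2 = J *ᵥ p.1} ⊆ {p | M *ᵥ p.2 = J *ᵥ p.1} := by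
  intro a ha
  have hperp : ∀ e, e ⬝ᵥ (M *ᵥ a.2 - J *ᵥ a.1) = 0 := by
    intro e
    obtain ⟨f, hf⟩ := mulVec_surjective_iff_isUnit.mpr hM (J *ᵥ e)
    have hb : M *ᵥ (e, f).2 = J *ᵥ (e, f).1 := hf
    rw [← pairing_eq_dotProduct_sub hJ hb]
    exact ha (e, f) hb
  have hzero : M *ᵥ a.2 - J *ᵥ a.1 = 0 :=
    dotProduct_eq_zero _ fun e => by rw [dotProduct_comm, hperp]
  exact sub_eq_zero.mp hzero

theorem pairingOrthogonal_setOf_mulVec_eq [DecidableEq n] {M J : Matrix n n R} (hJ : Jᵀ = -J)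
    (hM : IsUnit M) :
    pairingOrthogonal M {p | M *ᵥ p.2 = J *ᵥ p.1} = {p | M *ᵥ p.2 = J *ᵥ p.1} :=
  (pairingOrthogonal_subset hJ hM).antisymm (subset_pairingOrthogonal hJ)

end Matrix

/-- For symmetric positive definite `M₁ ∈ ℝ^{k×k}`, `M₂ ∈ ℝ^{l×l}` and a
coupling matrix `D ∈ ℝ^{k×l}`, set `M = diag(M₁, M₂)` and `J = [[0, −D],[Dᵀ, 0]]`. Then
`𝒟 = {(e, f) : M f = J e}` satisfies `𝒟 = 𝒟^⊥` for the pairing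
`⟪(e,f),(e',f')⟫ = eᵀ M f' + e'ᵀ M f`; that is, the finite-element-discretized
interconnection `M₁ u = D y`, `M₂ w = −Dᵀ v` defines a finite-dimensional Dirac
structure. -/
theorem discretized_interconnection_is_dirac_structure
    (k l : ℕ) (M₁ : Matrix (Fin k) (Fin k) ℝ) (M₂ : Matrix (Fin l) (Fin l) ℝ)
    (hM₁ : M₁.PosDef) (hM₂ : M₂.PosDef) (D : Matrix (Fin k) (Fin l) ℝ)
    (M : Matrix (Fin k ⊕ Fin l) (Fin k ⊕ Fin l) ℝ) (hM : M = Matrix.fromBlocks M₁ 0 0 M₂)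
    (J : Matrix (Fin k ⊕ Fin l) (Fin k ⊕ Fin l) ℝ) (hJ : J = Matrix.fromBlocks 0 (-D) Dᵀ 0)
    (𝒟 : Set ((Fin k ⊕ Fin l → ℝ) × (Fin k ⊕ Fin l → ℝ)))
    (h𝒟 : 𝒟 = {p | M.mulVec p.2 = J.mulVec p.1}) :
    𝒟 = {a | ∀ b ∈ 𝒟, a.1 ⬝ᵥ M.mulVec b.2 + b.1 ⬝ᵥ M.mulVec a.2 = 0} := by
  have hJ_skew : Jᵀ = -J := hJ ▸ transpose_fromBlocks_zero_neg_transpose_zero D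
  have hM_unit : IsUnit M := hM ▸ isUnit_fromBlocks_zero₂₁.mpr ⟨hM₁.isUnit, hM₂.isUnit⟩
  subst h𝒟
  exact (pairingOrthogonal_setOf_mulVec_eq hJ_skew hM_unit).symm
end
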